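/- Every perfectly normal mapping f : X → Y is hereditarily normal, i.e., for every subset X₀ ⊆ X the submapping f|_{X₀} : X₀ → Y is normal. -/
import Mathlib


/- Definitions from fiberwise general topology (Liseev, "Functional approach
to the normality of mappings"). -/

variable {X Y : Type*} [TopologicalSpace X] [TopologicalSpace Y]

/-- Oscillation of a function `φ` at a point `x`, computed within the subspace `S`:
the infimum over open neighborhoods `G` of `x` of `sup_{z ∈ G ∩ S} |φ x - φ z|`. -/
noncomputable def oscWithin (S : Set X) (φ : X → ℝ) (x : X) : ℝ :=
  sInf {r : ℝ | ∃ G : Set X, IsOpen G ∧ x ∈ G ∧ r = sSup ((fun z => |φ x - φ z|) '' (G ∩ S))}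

/-- Oscillation of `φ` on a set `A`, within the subspace `S`:
`sup_{x ∈ A} oscWithin S φ x` (equal to `0` for `A = ∅`, since `sSup ∅ = 0` in `ℝ`). -/
noncomputable def oscOnWithin (S : Set X) (φ : X → ℝ) (A : Set X) : ℝ :=
  sSup (oscWithin S φ '' A)

/-- Oscillation of `φ : X → ℝ` at a point `x ∈ X`. -/
noncomputable def osc (φ : X → ℝ) (x : X) : ℝ := oscWithin Set.univ φ x

/-- Oscillation of `φ : X → ℝ` on a set `A ⊆ X`. -/
noncomputable def oscOn (φ : X → ℝ) (A : Set X) : ℝ := oscOnWithin Set.univ φ A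

/-- `A` is an open subset of the subspace `S`. -/
def OpenIn (S A : Set X) : Prop := ∃ G : Set X, IsOpen G ∧ A = G ∩ S

/-- `A` is a closed subset of the subspace `S`. -/
def ClosedIn (S A : Set X) : Prop := ∃ C : Set X, IsClosed C ∧ A = C ∩ S

/-- Closure of `A ⊆ S` in the subspace `S`. -/
def clIn (S A : Set X) : Set X := closure A ∩ S

/-- Interior of `A ⊆ S` in the subspace `S`. -/
def intIn (S A : Set X) : Set X :=
  ⋃₀ {V : Set X | (∃ G : Set X, IsOpen G ∧ V = G ∩ S) ∧ V ⊆ A}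

/-- `A` is an `F_σ`-subset of the subspace `S`. -/
def FSigmaIn (S A : Set X) : Prop := ∃ C : ℕ → Set X, (∀ l, ClosedIn S (C l)) ∧ A = ⋃ l, C l

/-- A (bounded) function `φ : X → ℝ` is `f`-continuous at a point `y ∈ Y`:
for every `ε > 0` there is an open neighborhood `O` of `y` with `osc_φ(f⁻¹ O) < ε`. -/
def FContinuousAt (f : X → Y) (φ : X → ℝ) (y : Y) : Prop :=
  ∀ ε > (0 : ℝ), ∃ O : Set Y, IsOpen O ∧ y ∈ O ∧ oscOn φ (f ⁻¹' O) < ε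

/-- A family of functions `φ n : X → ℝ` is `f`-equicontinuous at a point `y ∈ Y`. -/
def FEquicontinuousAt (f : X → Y) (φ : ℕ → X → ℝ) (y : Y) : Prop :=
  ∀ ε > (0 : ℝ), ∃ O : Set Y, IsOpen O ∧ y ∈ O ∧ ∀ n, oscOn (φ n) (f ⁻¹' O) < ε

/-- `A` and `B` are separated by neighborhoods in the subspace `S`:
`A ∩ S` and `B ∩ S` have disjoint open neighborhoods in `S`. -/
def SeparatedIn (S A B : Set X) : Prop :=
  ∃ U V : Set X, OpenIn S U ∧ OpenIn S V ∧ A ∩ S ⊆ U ∧ B ∩ S ⊆ V ∧ U ∩ V = ∅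

/-- Prenormality of the restriction `f_O : f⁻¹ O → O` of `f` over `O`:
any two disjoint closed (in `f⁻¹ O`) sets `A`, `B` are `f_O`-separated by neighborhoods. -/
def PrenormalOn (f : X → Y) (O : Set Y) : Prop :=
  ∀ A B : Set X, ClosedIn (f ⁻¹' O) A → ClosedIn (f ⁻¹' O) B → A ∩ B = ∅ →
    ∀ y ∈ O, ∃ W : Set Y, IsOpen W ∧ y ∈ W ∧ W ⊆ O ∧ SeparatedIn (f ⁻¹' W) A B

/-- A mapping `f : X → Y` is prenormal if any two disjoint closed subsets of `X`
are `f`-separated by neighborhoods. -/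
def PrenormalMap (f : X → Y) : Prop :=
  ∀ A B : Set X, IsClosed A → IsClosed B → A ∩ B = ∅ →
    ∀ y : Y, ∃ W : Set Y, IsOpen W ∧ y ∈ W ∧ SeparatedIn (f ⁻¹' W) A B

/-- A mapping `f : X → Y` is normal if for every open `O ⊆ Y` the restriction
`f_O : f⁻¹ O → O` is prenormal. -/
def NormalMap (f : X → Y) : Prop := ∀ O : Set Y, IsOpen O → PrenormalOn f O

/-- σ-prenormality of the restriction `f_O : f⁻¹ O → O` of `f` over `O`. -/
def SigmaPrenormalOn (f : X → Y) (O : Set Y) : Prop :=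
  ∀ T : ℕ → Set X, (∀ l, ClosedIn (f ⁻¹' O) (T l)) →
    ∀ F : Set X, ClosedIn (f ⁻¹' O) F → (⋃ l, T l) ∩ F = ∅ →
      ∀ y ∈ O, ∃ W : Set Y, IsOpen W ∧ y ∈ W ∧ W ⊆ O ∧
        ∃ V : ℕ → Set X, (∀ l, OpenIn (f ⁻¹' W) (V l)) ∧
          (∀ l, T l ∩ f ⁻¹' W ⊆ V l) ∧
          (⋃ l, clIn (f ⁻¹' W) (V l)) ∩ F = ∅

/-- A mapping `f : X → Y` is σ-normal if for every open `O ⊆ Y` the restriction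
`f_O : f⁻¹ O → O` is σ-prenormal. -/
def SigmaNormalMap (f : X → Y) : Prop := ∀ O : Set Y, IsOpen O → SigmaPrenormalOn f O

/-- The submapping `f|_{X₀} : X₀ → Y` is of type `F_σ`: every `y ∈ Y` has an open
neighborhood `W` with `X₀ ∩ f⁻¹ W` an `F_σ`-subset of the subspace `f⁻¹ W`. -/
def FSigmaSubmap (f : X → Y) (X₀ : Set X) : Prop :=
  ∀ y : Y, ∃ W : Set Y, IsOpen W ∧ y ∈ W ∧ FSigmaIn (f ⁻¹' W) (X₀ ∩ f ⁻¹' W)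

/-- The submapping `(f_O)|_{X₀} : X₀ → O` of the restriction `f_O : f⁻¹ O → O`
is of type `F_σ`. -/
def FSigmaSubmapOn (f : X → Y) (O : Set Y) (X₀ : Set X) : Prop :=
  ∀ y ∈ O, ∃ W : Set Y, IsOpen W ∧ y ∈ W ∧ W ⊆ O ∧ FSigmaIn (f ⁻¹' W) (X₀ ∩ f ⁻¹' W)

/-- `U 0, …, U (k-1)` is a regular `k`-partition of the subspace `S`. -/
structure IsRegularPartition (S : Set X) (k : ℕ) (U : ℕ → Set X) : Prop where
  subset : ∀ m < k, U m ⊆ S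
  disj : ∀ m < k, ∀ m' < k, m ≠ m' → U m ∩ U m' = ∅
  cover : (⋃ m ∈ Finset.range k, U m) = S
  closed : ∀ p < k, ClosedIn S (⋃ m ∈ Finset.range (p + 1), U m)
  sep : ∀ p, p + 3 ≤ k →
    (⋃ m ∈ Finset.range (p + 1), U m) ∩ clIn S (⋃ m ∈ Finset.Ico (p + 2) k, U m) = ∅

/-- A consistent family of binary partitions of the mapping `f : X → Y` at `y ∈ Y`. -/
structure ConsistentBinaryPartitions (f : X → Y) (y : Y) (O : ℕ → Set Y)
    (U : ℕ → ℕ → Set X) : Prop where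
  isOpen : ∀ n, IsOpen (O n)
  mem : ∀ n, y ∈ O n
  zero : O 0 = Set.univ
  mono : ∀ n, O (n + 1) ⊆ O n
  part : ∀ n, IsRegularPartition (f ⁻¹' O n) (2 ^ n) (U n)
  consistent : ∀ n, ∀ k < 2 ^ n,
    U (n + 1) (2 * k) ∪ U (n + 1) (2 * k + 1) = U n k ∩ f ⁻¹' O (n + 1)

/-- A mapping `f : X → Y` is perfectly normal (Definition 5.1). -/
def PerfectlyNormalMap (f : X → Y) : Prop :=
  ∀ O : Set X, IsOpen O → ∀ y : Y, ∃ Oy : Set Y, IsOpen Oy ∧ y ∈ Oy ∧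
    ∃ φ : ℕ → X → ℝ, (∀ l x, φ l x ∈ Set.Icc (0 : ℝ) 1) ∧ FEquicontinuousAt f φ y ∧
      O ∩ f ⁻¹' Oy = (⋃ l, φ l ⁻¹' {1} ∩ f ⁻¹' Oy) ∧
      ∀ l, f ⁻¹' Oy \ O ⊆ φ l ⁻¹' {0} ∩ f ⁻¹' Oy

/-- The submapping `f|_U : U → Y` is `f`-functionally open. -/
def FFunctionallyOpen (f : X → Y) (U : Set X) : Prop :=
  ∀ y : Y, ∃ Oy : Set Y, IsOpen Oy ∧ y ∈ Oy ∧
    ∃ φ : X → ℝ, (∀ x, φ x ∈ Set.Icc (0 : ℝ) 1) ∧ FContinuousAt f φ y ∧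
      U ∩ f ⁻¹' Oy = φ ⁻¹' Set.Ioc (0 : ℝ) 1 ∩ f ⁻¹' Oy

/-- The submapping `f|_F : F → Y` is `f`-functionally closed. -/
def FFunctionallyClosed (f : X → Y) (F : Set X) : Prop :=
  ∀ y : Y, ∃ Oy : Set Y, IsOpen Oy ∧ y ∈ Oy ∧
    ∃ φ : X → ℝ, (∀ x, φ x ∈ Set.Icc (0 : ℝ) 1) ∧ FContinuousAt f φ y ∧
      F ∩ f ⁻¹' Oy = φ ⁻¹' {0} ∩ f ⁻¹' Oy

/-- A σ-normal mapping `f : X → Y` is co-σ-perfectly normal if every open submapping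
is of type `F_σ`. -/
def CoSigmaPerfectlyNormalMap (f : X → Y) : Prop :=
  SigmaNormalMap f ∧ ∀ U : Set X, IsOpen U → FSigmaSubmap f U

private lemma aux_bdd {X : Type*} (φ : X → ℝ) (hφ : ∀ x, φ x ∈ Set.Icc (0:ℝ) 1) (x : X)
    (s : Set X) : BddAbove ((fun z => |φ x - φ z|) '' s) := by
  refine ⟨1, ?_⟩
  rintro r ⟨z, _, rfl⟩
  have h1 := hφ x; have h2 := hφ z
  rw [Set.mem_Icc] at h1 h2
  rw [abs_le]
  constructor <;> linarith [h1.1, h1.2, h2.1, h2.2]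

private lemma oscWithin_le_one {X : Type*} [TopologicalSpace X] (φ : X → ℝ)
    (hφ : ∀ x, φ x ∈ Set.Icc (0:ℝ) 1) (x : X) : oscWithin Set.univ φ x ≤ 1 := by
  have hmem : sSup ((fun z => |φ x - φ z|) '' (Set.univ ∩ Set.univ)) ∈
      {r : ℝ | ∃ G : Set X, IsOpen G ∧ x ∈ G ∧
        r = sSup ((fun z => |φ x - φ z|) '' (G ∩ Set.univ))} :=
    ⟨Set.univ, isOpen_univ, Set.mem_univ x, rfl⟩
  refine csInf_le_of_le ?_ hmem ?_
  · refine ⟨0, ?_⟩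
    rintro r ⟨G, hG, hxG, rfl⟩
    exact Real.sSup_nonneg (by rintro r ⟨z, _, rfl⟩; positivity)
  · refine Real.sSup_le ?_ zero_le_one
    rintro r ⟨z, _, rfl⟩
    have h1 := hφ x; have h2 := hφ z
    rw [Set.mem_Icc] at h1 h2
    rw [abs_le]
    constructor <;> linarith [h1.1, h1.2, h2.1, h2.2]

private lemma exists_nhds_of_oscWithin_lt {X : Type*} [TopologicalSpace X] (φ : X → ℝ)
    (hφ : ∀ x, φ x ∈ Set.Icc (0:ℝ) 1) {x : X} {ε : ℝ}
    (h : oscWithin Set.univ φ x < ε) :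
    ∃ G : Set X, IsOpen G ∧ x ∈ G ∧ ∀ z ∈ G, |φ x - φ z| < ε := by
  by_contra hc
  push_neg at hc
  have hge : ε ≤ oscWithin Set.univ φ x := by
    refine le_csInf ⟨_, Set.univ, isOpen_univ, Set.mem_univ x, rfl⟩ ?_
    rintro r ⟨G, hG, hxG, rfl⟩
    obtain ⟨z, hzG, hz⟩ := hc G hG hxG
    exact hz.trans (le_csSup (aux_bdd φ hφ x _) ⟨z, ⟨hzG, Set.mem_univ z⟩, rfl⟩)
  linarith

private lemma oscWithin_lt_of_oscOn_lt {X : Type*} [TopologicalSpace X] (φ : X → ℝ)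
    (hφ : ∀ x, φ x ∈ Set.Icc (0:ℝ) 1) {A : Set X} {x : X} (hx : x ∈ A) {ε : ℝ}
    (h : oscOn φ A < ε) : oscWithin Set.univ φ x < ε := by
  refine lt_of_le_of_lt ?_ h
  unfold oscOn oscOnWithin
  exact le_csSup ⟨1, by rintro r ⟨z, _, rfl⟩; exact oscWithin_le_one φ hφ z⟩ ⟨x, hx, rfl⟩

/-- Theorem 5.5: every perfectly normal mapping is hereditarily normal. -/
theorem perfectlyNormalMap_hereditarilyNormal {X Y : Type*} [TopologicalSpace X]
    [TopologicalSpace Y] (f : X → Y) (hf : Continuous f) (h : PerfectlyNormalMap f) :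
    ∀ X₀ : Set X, NormalMap (fun x : X₀ => f ↑x) := by
  intro X₀ O hO A B hA hB hAB y hy
  classical
  obtain ⟨CA, hCAclosed, hAeq⟩ := hA
  obtain ⟨CB, hCBclosed, hBeq⟩ := hB
  set GA : Set X := (closure (Subtype.val '' B))ᶜ with hGAdef
  set GB : Set X := (closure (Subtype.val '' A))ᶜ with hGBdef
  obtain ⟨Oy1, hOy1, hyOy1, φ, hφr, hφe, hφeq, hφz⟩ := h GA isClosed_closure.isOpen_compl y
  obtain ⟨Oy2, hOy2, hyOy2, ψ, hψr, hψe, hψeq, hψz⟩ := h GB isClosed_closure.isOpen_compl y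
  obtain ⟨W1, hW1, hyW1, hφosc⟩ := hφe (1/3) (by norm_num)
  obtain ⟨W2, hW2, hyW2, hψosc⟩ := hψe (1/3) (by norm_num)
  set W : Set Y := O ∩ Oy1 ∩ Oy2 ∩ W1 ∩ W2 with hWdef
  have hAS : A ⊆ (fun x : X₀ => f ↑x) ⁻¹' O := by rw [hAeq]; exact Set.inter_subset_right
  have hBS : B ⊆ (fun x : X₀ => f ↑x) ⁻¹' O := by rw [hBeq]; exact Set.inter_subset_right
  -- points of A are in GA, points of B are in GB
  have haGA : ∀ a ∈ A, (↑a : X) ∈ GA := by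
    intro a ha
    simp only [hGAdef, Set.mem_compl_iff]
    intro hcl
    have hclB : a ∈ closure B := closure_subtype.mpr hcl
    have hsub : closure B ⊆ CB := hCBclosed.closure_subset_iff.mpr
      (by rw [hBeq]; exact Set.inter_subset_left)
    have haB : a ∈ B := by rw [hBeq]; exact ⟨hsub hclB, hAS ha⟩
    have : a ∈ A ∩ B := ⟨ha, haB⟩
    rw [hAB] at this
    exact this
  have hbGB : ∀ b ∈ B, (↑b : X) ∈ GB := by
    intro b hb
    simp only [hGBdef, Set.mem_compl_iff]
    intro hcl
    have hclA : b ∈ closure A := closure_subtype.mpr hcl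
    have hsub : closure A ⊆ CA := hCAclosed.closure_subset_iff.mpr
      (by rw [hAeq]; exact Set.inter_subset_left)
    have hbA : b ∈ A := by rw [hAeq]; exact ⟨hsub hclA, hBS hb⟩
    have : b ∈ A ∩ B := ⟨hbA, hb⟩
    rw [hAB] at this
    exact this
  have haGBc : ∀ a ∈ A, (↑a : X) ∉ GB := by
    intro a ha hmem
    exact hmem (subset_closure ⟨a, ha, rfl⟩)
  have hbGAc : ∀ b ∈ B, (↑b : X) ∉ GA := by
    intro b hb hmem
    exact hmem (subset_closure ⟨b, hb, rfl⟩)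
  -- values of φ, ψ on A and B
  have hψ0 : ∀ a ∈ A, f ↑a ∈ Oy2 → ∀ l, ψ l ↑a = 0 := by
    intro a ha hOya l
    have := (hψz l ⟨hOya, haGBc a ha⟩).1
    simpa using this
  have hφ0 : ∀ b ∈ B, f ↑b ∈ Oy1 → ∀ l, φ l ↑b = 0 := by
    intro b hb hOyb l
    have := (hφz l ⟨hOyb, hbGAc b hb⟩).1
    simpa using this
  have hφ1 : ∀ a ∈ A, f ↑a ∈ Oy1 → ∃ l, φ l ↑a = 1 := by
    intro a ha hOya
    have hmem : (↑a : X) ∈ GA ∩ f ⁻¹' Oy1 := ⟨haGA a ha, hOya⟩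
    rw [hφeq] at hmem
    obtain ⟨l, hl⟩ := Set.mem_iUnion.mp hmem
    exact ⟨l, hl.1⟩
  have hψ1 : ∀ b ∈ B, f ↑b ∈ Oy2 → ∃ l, ψ l ↑b = 1 := by
    intro b hb hOyb
    have hmem : (↑b : X) ∈ GB ∩ f ⁻¹' Oy2 := ⟨hbGB b hb, hOyb⟩
    rw [hψeq] at hmem
    obtain ⟨l, hl⟩ := Set.mem_iUnion.mp hmem
    exact ⟨l, hl.1⟩
  -- oscillation bounds on f ⁻¹' W
  have hφoscW : ∀ l (x : X), f x ∈ W → oscWithin Set.univ (φ l) x < 1/3 := by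
    intro l x hx
    exact oscWithin_lt_of_oscOn_lt (φ l) (hφr l) (show x ∈ f ⁻¹' W1 from hx.1.2) (hφosc l)
  have hψoscW : ∀ l (x : X), f x ∈ W → oscWithin Set.univ (ψ l) x < 1/3 := by
    intro l x hx
    exact oscWithin_lt_of_oscOn_lt (ψ l) (hψr l) (show x ∈ f ⁻¹' W2 from hx.2) (hψosc l)
  -- the basic open pieces
  set UX : ℕ → Set X :=
    fun l => ⋃₀ {G : Set X | IsOpen G ∧ ∀ z ∈ G ∩ f ⁻¹' W, φ l z > 2/3} with hUXdef
  set VX : ℕ → Set X :=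
    fun l => ⋃₀ {G : Set X | IsOpen G ∧ ∀ z ∈ G ∩ f ⁻¹' W, ψ l z > 2/3} with hVXdef
  have hUXopen : ∀ l, IsOpen (UX l) := fun l => isOpen_sUnion fun G hG => hG.1
  have hVXopen : ∀ l, IsOpen (VX l) := fun l => isOpen_sUnion fun G hG => hG.1
  have hUXval : ∀ l (x : X), x ∈ UX l → f x ∈ W → φ l x > 2/3 := by
    rintro l x ⟨G, ⟨hGo, hGp⟩, hxG⟩ hxW
    exact hGp x ⟨hxG, hxW⟩
  have hVXval : ∀ l (x : X), x ∈ VX l → f x ∈ W → ψ l x > 2/3 := by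
    rintro l x ⟨G, ⟨hGo, hGp⟩, hxG⟩ hxW
    exact hGp x ⟨hxG, hxW⟩
  have memUX : ∀ l (x : X), f x ∈ W → φ l x = 1 → x ∈ UX l := by
    intro l x hxW hx1
    obtain ⟨G, hGo, hxG, hG⟩ := exists_nhds_of_oscWithin_lt (φ l) (hφr l) (hφoscW l x hxW)
    refine ⟨G, ⟨hGo, ?_⟩, hxG⟩
    intro z hz
    have := hG z hz.1
    rw [hx1, abs_lt] at this
    linarith [this.1, this.2]
  have memVX : ∀ l (x : X), f x ∈ W → ψ l x = 1 → x ∈ VX l := by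
    intro l x hxW hx1
    obtain ⟨G, hGo, hxG, hG⟩ := exists_nhds_of_oscWithin_lt (ψ l) (hψr l) (hψoscW l x hxW)
    refine ⟨G, ⟨hGo, ?_⟩, hxG⟩
    intro z hz
    have := hG z hz.1
    rw [hx1, abs_lt] at this
    linarith [this.1, this.2]
  have notClV : ∀ l (x : X), f x ∈ W → ψ l x = 0 → x ∉ closure (VX l ∩ f ⁻¹' W) := by
    intro l x hxW hx0 hcl
    obtain ⟨G, hGo, hxG, hG⟩ := exists_nhds_of_oscWithin_lt (ψ l) (hψr l) (hψoscW l x hxW)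
    obtain ⟨u, huG, huV, huW⟩ := mem_closure_iff.mp hcl G hGo hxG
    have h1 : ψ l u > 2/3 := hVXval l u huV huW
    have h2 := hG u huG
    rw [hx0, abs_lt] at h2
    linarith [h2.1, h2.2]
  have notClU : ∀ l (x : X), f x ∈ W → φ l x = 0 → x ∉ closure (UX l ∩ f ⁻¹' W) := by
    intro l x hxW hx0 hcl
    obtain ⟨G, hGo, hxG, hG⟩ := exists_nhds_of_oscWithin_lt (φ l) (hφr l) (hφoscW l x hxW)
    obtain ⟨u, huG, huV, huW⟩ := mem_closure_iff.mp hcl G hGo hxG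
    have h1 : φ l u > 2/3 := hUXval l u huV huW
    have h2 := hG u huG
    rw [hx0, abs_lt] at h2
    linarith [h2.1, h2.2]
  -- the final open sets
  set UU : Set X :=
    ⋃ l, (UX l \ ⋃ m ∈ Finset.range (l+1), closure (VX m ∩ f ⁻¹' W)) with hUUdef
  set VV : Set X :=
    ⋃ l, (VX l \ ⋃ m ∈ Finset.range (l+1), closure (UX m ∩ f ⁻¹' W)) with hVVdef
  have hUUopen : IsOpen UU := isOpen_iUnion fun l => (hUXopen l).sdiff
    (isClosed_biUnion_finset fun m _ => isClosed_closure)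
  have hVVopen : IsOpen VV := isOpen_iUnion fun l => (hVXopen l).sdiff
    (isClosed_biUnion_finset fun m _ => isClosed_closure)
  refine ⟨W, ((((hO.inter hOy1).inter hOy2).inter hW1).inter hW2),
    ⟨⟨⟨⟨hy, hyOy1⟩, hyOy2⟩, hyW1⟩, hyW2⟩, fun y' hy' => hy'.1.1.1.1,
    Subtype.val ⁻¹' UU ∩ (fun x : X₀ => f ↑x) ⁻¹' W,
    Subtype.val ⁻¹' VV ∩ (fun x : X₀ => f ↑x) ⁻¹' W,
    ⟨Subtype.val ⁻¹' UU, hUUopen.preimage continuous_subtype_val, rfl⟩,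
    ⟨Subtype.val ⁻¹' VV, hVVopen.preimage continuous_subtype_val, rfl⟩,
    ?_, ?_, ?_⟩
  · -- A ∩ f'⁻¹' W ⊆ U
    rintro a ⟨ha, haW⟩
    refine ⟨?_, haW⟩
    have haW' : f ↑a ∈ W := haW
    obtain ⟨l, hl⟩ := hφ1 a ha haW'.1.1.1.2
    refine Set.mem_iUnion.mpr ⟨l, memUX l ↑a haW' hl, ?_⟩
    intro hmem
    obtain ⟨m, -, hm⟩ := Set.mem_iUnion₂.mp hmem
    exact notClV m ↑a haW' (hψ0 a ha haW'.1.1.2 m) hm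
  · -- B ∩ f'⁻¹' W ⊆ V
    rintro b ⟨hb, hbW⟩
    refine ⟨?_, hbW⟩
    have hbW' : f ↑b ∈ W := hbW
    obtain ⟨l, hl⟩ := hψ1 b hb hbW'.1.1.2
    refine Set.mem_iUnion.mpr ⟨l, memVX l ↑b hbW' hl, ?_⟩
    intro hmem
    obtain ⟨m, -, hm⟩ := Set.mem_iUnion₂.mp hmem
    exact notClU m ↑b hbW' (hφ0 b hb hbW'.1.1.1.2 m) hm
  · -- disjointness
    apply Set.eq_empty_iff_forall_notMem.mpr
    rintro x ⟨⟨hxU, hxW⟩, hxV, -⟩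
    have hxW' : f ↑x ∈ W := hxW
    obtain ⟨l, hlmem⟩ := Set.mem_iUnion.mp hxU
    obtain ⟨k, hkmem⟩ := Set.mem_iUnion.mp hxV
    rcases le_total l k with hlk | hkl
    · refine hkmem.2 (Set.mem_iUnion₂.mpr ⟨l, ?_, subset_closure ⟨hlmem.1, hxW'⟩⟩)
      exact Finset.mem_range.mpr (Nat.lt_succ_of_le hlk)
    · refine hlmem.2 (Set.mem_iUnion₂.mpr ⟨k, ?_, subset_closure ⟨hkmem.1, hxW'⟩⟩)
      exact Finset.mem_range.mpr (Nat.lt_succ_of_le hkl)
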